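/- arXiv:1407.2208 — 6 statements merged into one kernel-verified Lean document; each statement's English description precedes it below -/
import Mathlib

section
/- The Gray map φ_L: (Z_{p^s}, d_L) → (F_p^{p^{s-1}}, d_H) is an isometry: for all x, y in Z_{p^s}, the Hamming distance between φ_L(x) and φ_L(y) equals the extended Lee distance w_L(x - y). -/
/-- The extended Lee weight on `ZMod (p^s)`. -/
def leeWt (p s : ℕ) (x : ZMod (p ^ s)) : ℕ :=
  if x.val ≤ p ^ s - p ^ (s - 1) then min x.val (p ^ (s - 1)) else p ^ s - x.val

/-- The Gray map `φ_L : ZMod (p^s) → (F_p)^(p^(s-1))`: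
`x = q·p^(s-1) + r` maps to the vector with `q+1` in the first `r` coordinates
and `q` in the rest. -/
def gray (p s : ℕ) (x : ZMod (p ^ s)) : Fin (p ^ (s - 1)) → ZMod p :=
  fun i =>
    if i.val < x.val % p ^ (s - 1) then ((x.val / p ^ (s - 1) + 1 : ℕ) : ZMod p)
    else ((x.val / p ^ (s - 1) : ℕ) : ZMod p)

private lemma gray_apply (p s : ℕ) (x : ZMod (p ^ s)) (i : Fin (p ^ (s - 1)))
    (hm : 0 < p ^ (s - 1)) :
    gray p s x i = (((x.val + (p ^ (s - 1) - 1 - i.val)) / p ^ (s - 1) : ℕ) : ZMod p) := by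
  have hi : i.val < p ^ (s - 1) := i.isLt
  obtain ⟨q, r, hqr, hr⟩ : ∃ q r, x.val = p ^ (s - 1) * q + r ∧ r < p ^ (s - 1) :=
    ⟨x.val / p ^ (s - 1), x.val % p ^ (s - 1), (Nat.div_add_mod _ _).symm, Nat.mod_lt _ hm⟩
  have hmod : x.val % p ^ (s - 1) = r := by
    rw [hqr, Nat.mul_add_mod, Nat.mod_eq_of_lt hr]
  have hdiv : x.val / p ^ (s - 1) = q := by
    rw [hqr, Nat.mul_add_div hm, Nat.div_eq_of_lt hr, add_zero]
  unfold gray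
  rw [hmod, hdiv]
  rcases lt_or_ge i.val r with h | h
  · rw [if_pos h]
    have hmul : p ^ (s - 1) * (q + 1) = p ^ (s - 1) * q + p ^ (s - 1) := by ring
    have key : x.val + (p ^ (s - 1) - 1 - i.val)
        = p ^ (s - 1) * (q + 1) + (r - 1 - i.val) := by omega
    rw [key, Nat.mul_add_div hm, Nat.div_eq_of_lt (by omega), add_zero]
  · rw [if_neg (not_lt.mpr h)]
    have key : x.val + (p ^ (s - 1) - 1 - i.val)
        = p ^ (s - 1) * q + (r + (p ^ (s - 1) - 1 - i.val)) := by omega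
    rw [key, Nat.mul_add_div hm, Nat.div_eq_of_lt (by omega), add_zero]

/-- The Gray map is an isometry from `(ZMod (p^s), d_L)` to `((F_p)^(p^(s-1)), d_H)`:
the Hamming distance of the images equals the extended Lee distance `w_L(x - y)`. -/
theorem gray_isometry (p s : ℕ) (hp : p.Prime) (hs : 1 ≤ s) (x y : ZMod (p ^ s)) :
    hammingDist (gray p s x) (gray p s y) = leeWt p s (x - y) := by
  classical
  have hp2 : 2 ≤ p := hp.two_le
  have hm : 0 < p ^ (s - 1) := pow_pos hp.pos _
  have hN : p ^ s = p ^ (s - 1) * p := by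
    rw [← pow_succ]; congr 1; omega
  haveI : NeZero (p ^ s) := ⟨(pow_pos hp.pos s).ne'⟩
  set m := p ^ (s - 1) with hmdef
  set c := (x - y).val with hcdef
  obtain ⟨k, hk⟩ : ∃ k, y.val + c = x.val + m * p * k := by
    have hval : (y.val + c) % p ^ s = x.val := by
      conv_rhs => rw [show x = y + (x - y) by ring]
      rw [ZMod.val_add]
    refine ⟨(y.val + c) / p ^ s, ?_⟩
    have h1 := Nat.div_add_mod (y.val + c) (p ^ s)
    rw [hval] at h1
    rw [← hN]
    omega
  set qc := c / m with hqcdef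
  set rc := c % m with hrcdef
  have hcqr : c = m * qc + rc := (Nat.div_add_mod c m).symm
  have hrcm : rc < m := Nat.mod_lt _ hm
  have hcN : c < m * p := by rw [← hN]; exact ZMod.val_lt _
  have hqcp : qc < p := Nat.div_lt_of_lt_mul hcN
  set Q : Fin m → Prop := fun v => ¬ p ∣ (qc + if m ≤ v.val + rc then 1 else 0) with hQdef
  set σ : Fin m → Fin m :=
    fun i => ⟨(y.val + (m - 1 - i.val)) % m, Nat.mod_lt _ hm⟩ with hσdef
  have hσinj : Function.Injective σ := by
    intro i₁ i₂ h
    have h1 : (y.val + (m - 1 - i₁.val)) % m = (y.val + (m - 1 - i₂.val)) % m := by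
      simpa [hσdef, Fin.ext_iff] using h
    have h2 : (m - 1 - i₁.val) % m = (m - 1 - i₂.val) % m :=
      Nat.ModEq.add_left_cancel' y.val h1
    have hi1 : i₁.val < m := i₁.isLt
    have hi2 : i₂.val < m := i₂.isLt
    rw [Nat.mod_eq_of_lt (by omega), Nat.mod_eq_of_lt (by omega)] at h2
    exact Fin.ext (by omega)
  have hkey : ∀ i : Fin m, (gray p s x i ≠ gray p s y i ↔ Q (σ i)) := by
    intro i
    rw [gray_apply p s x i hm, gray_apply p s y i hm]
    simp only [← hmdef]
    have hk' : m * p * k = m * (p * k) := by ring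
    have e1 : (((x.val + (m - 1 - i.val)) / m : ℕ) : ZMod p)
        = (((y.val + (m - 1 - i.val) + c) / m : ℕ) : ZMod p) := by
      have h2 : y.val + (m - 1 - i.val) + c
          = x.val + (m - 1 - i.val) + m * (p * k) := by omega
      rw [h2, Nat.add_mul_div_left _ _ hm]
      push_cast
      simp [ZMod.natCast_self]
    have e2 : (y.val + (m - 1 - i.val) + c) / m
        = (y.val + (m - 1 - i.val)) / m
          + (qc + if m ≤ (y.val + (m - 1 - i.val)) % m + rc then 1 else 0) := by
      rw [Nat.add_div hm, ← hqcdef, ← hrcdef, add_assoc]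
    rw [e1, e2, Nat.cast_add]
    have hv : ((σ i : Fin m) : ℕ) = (y.val + (m - 1 - i.val)) % m := rfl
    simp only [hQdef, hv]
    constructor
    · intro h hdvd
      exact h (by rw [(ZMod.natCast_eq_zero_iff _ p).mpr hdvd, add_zero])
    · intro h hEq
      exact h ((ZMod.natCast_eq_zero_iff _ p).mp (add_eq_left.mp hEq))
  unfold hammingDist
  have hfc : (Finset.univ.filter fun i => gray p s x i ≠ gray p s y i)
      = Finset.univ.filter fun i => Q (σ i) :=
    Finset.filter_congr (fun i _ => hkey i)
  rw [hfc]
  have hσbij : Function.Bijective σ := Finite.injective_iff_bijective.mp hσinj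
  have himage : ((Finset.univ.filter fun i => Q (σ i)).image σ) = Finset.univ.filter Q := by
    ext v
    simp only [Finset.mem_image, Finset.mem_filter, Finset.mem_univ, true_and]
    constructor
    · rintro ⟨i, hQi, rfl⟩; exact hQi
    · intro hv; obtain ⟨i, rfl⟩ := hσbij.surjective v; exact ⟨i, hv, rfl⟩
  rw [← Finset.card_image_of_injective _ hσinj, himage]
  have hcard : (Finset.univ.filter Q).card
      = ((Finset.range m).filter fun v => ¬ p ∣ (qc + if m ≤ v + rc then 1 else 0)).card := by
    rw [Finset.card_filter, Finset.card_filter]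
    exact Fin.sum_univ_eq_sum_range
      (fun v => if ¬ p ∣ (qc + if m ≤ v + rc then 1 else 0) then 1 else 0) m
  rw [hcard]
  clear hfc himage hσbij hσinj hkey hQdef hσdef hcard
  clear Q σ
  clear_value m c qc rc
  have hK : m * (p - 1) + m = m * p := by rw [← Nat.mul_succ]; congr 1; omega
  have hm1 : m * 1 ≤ m * (p - 1) := Nat.mul_le_mul_left m (by omega)
  simp only [leeWt]
  rw [← hcdef, ← hmdef, hN]
  by_cases hq0 : qc = 0
  · have hfilter : ((Finset.range m).filter fun v => ¬ p ∣ (qc + if m ≤ v + rc then 1 else 0))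
        = Finset.Ico (m - rc) m := by
      ext v
      simp only [Finset.mem_filter, Finset.mem_range, Finset.mem_Ico, hq0, zero_add]
      by_cases h : m ≤ v + rc
      · simp only [if_pos h, Nat.dvd_one]
        constructor
        · rintro ⟨hv, -⟩; omega
        · rintro ⟨-, hv⟩; exact ⟨hv, by omega⟩
      · simp only [if_neg h, dvd_zero, not_true_eq_false, and_false, false_iff]
        omega
    rw [hfilter, Nat.card_Ico]
    subst hq0
    split_ifs <;> omega
  · by_cases hq1 : qc = p - 1
    · have hnd : ¬ p ∣ qc := fun hd => by
        have := Nat.le_of_dvd (by omega) hd; omega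
      have hpd : p ∣ (qc + 1) := by
        have : qc + 1 = p := by omega
        rw [this]
      have hfilter : ((Finset.range m).filter fun v => ¬ p ∣ (qc + if m ≤ v + rc then 1 else 0))
          = Finset.range (m - rc) := by
        ext v
        simp only [Finset.mem_filter, Finset.mem_range]
        by_cases h : m ≤ v + rc
        · simp only [if_pos h, hpd, not_true_eq_false, and_false, false_iff]
          omega
        · simp only [if_neg h, add_zero, hnd, not_false_eq_true, and_true]
          omega
      rw [hfilter, Finset.card_range]
      subst hq1
      split_ifs <;> omega
    · have hnd1 : ¬ p ∣ qc := fun hd => by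
        have := Nat.le_of_dvd (by omega) hd; omega
      have hnd2 : ¬ p ∣ (qc + 1) := fun hd => by
        have := Nat.le_of_dvd (by omega) hd; omega
      have hfilter : ((Finset.range m).filter fun v => ¬ p ∣ (qc + if m ≤ v + rc then 1 else 0))
          = Finset.range m := by
        ext v
        simp only [Finset.mem_filter, Finset.mem_range, and_iff_left_iff_imp]
        intro _
        split_ifs with h
        · exact hnd2
        · simpa using hnd1
      rw [hfilter, Finset.card_range]
      have h2 : m * (qc + 1) ≤ m * (p - 1) := Nat.mul_le_mul_left m (by omega)
      have h3 : m * (qc + 1) = m * qc + m := Nat.mul_succ m qc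
      have h4 : m * 1 ≤ m * qc := Nat.mul_le_mul_left m (by omega)
      split_ifs <;> omega
end

section
/- For all x in Z_{p^s}, the Hamming weight of φ_L(x) in F_p^{p^{s-1}} equals w_L(x). -/
lemma card_filter_val_lt (m r : ℕ) (h : r ≤ m) :
    (Finset.univ.filter fun i : Fin m => i.val < r).card = r := by
  rw [Finset.card_filter]
  rw [Fin.sum_univ_eq_sum_range (fun j => if j < r then 1 else 0)]
  rw [← Finset.card_filter, ← Nat.Iio_eq_range, Finset.Iio_filter_lt, min_eq_right h,
    Nat.card_Iio]

lemma card_filter_not_val_lt (m r : ℕ) (h : r ≤ m) :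
    (Finset.univ.filter fun i : Fin m => ¬ i.val < r).card = m - r := by
  rw [Finset.filter_not, Finset.card_sdiff_of_subset (Finset.filter_subset _ _),
    card_filter_val_lt m r h, Finset.card_univ, Fintype.card_fin]

/-- The Hamming weight of `φ_L(x)` equals the extended Lee weight `w_L(x)`. -/
theorem gray_hammingNorm (p s : ℕ) (hp : p.Prime) (hs : 1 ≤ s) (x : ZMod (p ^ s)) :
    hammingNorm (gray p s x) = leeWt p s x := by
  haveI : NeZero p := ⟨hp.ne_zero⟩
  haveI : NeZero (p ^ s) := ⟨pow_ne_zero _ hp.ne_zero⟩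
  haveI := Fact.mk hp
  have hp2 : 2 ≤ p := hp.two_le
  set m := p ^ (s - 1) with hm
  have hm0 : 0 < m := pow_pos hp.pos _
  have hps : p ^ s = m * p := by rw [hm, ← pow_succ, Nat.sub_add_cancel hs]
  have h2m : m * 2 ≤ m * p := Nat.mul_le_mul_left _ hp2
  have hmp : m * (p - 1) + m = m * p := by
    cases p with
    | zero => omega
    | succ n => simp [Nat.mul_succ]
  set v := x.val with hv
  have hvlt : v < p ^ s := x.val_lt
  set q := v / m with hq
  set r := v % m with hr
  have hrm : r < m := Nat.mod_lt _ hm0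
  have hqp : q < p := Nat.div_lt_iff_lt_mul hm0 |>.mpr (by rw [mul_comm, ← hps]; exact hvlt)
  have hvqr : v = m * q + r := (Nat.div_add_mod v m).symm
  have hcast : ∀ k : ℕ, 0 < k → k < p → ((k : ℕ) : ZMod p) ≠ 0 := by
    intro k hk0 hkp hk
    rw [ZMod.natCast_eq_zero_iff] at hk
    exact absurd (Nat.le_of_dvd hk0 hk) (not_le.mpr hkp)
  unfold hammingNorm gray leeWt
  simp only [hammingDist, Pi.zero_apply]
  rw [← hm, ← hv, ← hq, ← hr]
  rcases Nat.lt_or_ge q (p - 1) with hq1 | hq1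
  · rcases Nat.eq_zero_or_pos q with hq0 | hq0
    · -- q = 0 : weight r, Lee weight v = r
      have hmq0 : m * q = 0 := by rw [hq0, mul_zero]
      have hvr : v = r := by omega
      have hcond : v ≤ p ^ s - m := by omega
      rw [if_pos hcond, hvr, min_eq_left hrm.le]
      have heq : (Finset.univ.filter fun i : Fin m =>
          (if i.val < r then ((q + 1 : ℕ) : ZMod p) else ((q : ℕ) : ZMod p)) ≠ 0) =
          Finset.univ.filter fun i : Fin m => i.val < r := by
        apply Finset.filter_congr
        intro i _
        have ha1 : ((q + 1 : ℕ) : ZMod p) = 1 := by rw [hq0]; norm_num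
        have hb0 : ((q : ℕ) : ZMod p) = 0 := by rw [hq0]; norm_num
        by_cases h : i.val < r <;> simp [h, ha1, hb0]
      rw [heq, card_filter_val_lt m r hrm.le]
    · -- 0 < q < p - 1 : weight m, Lee weight min v m = m
      have hqm : m ≤ m * q := Nat.le_mul_of_pos_right _ hq0
      have hub : m * (q + 1) ≤ m * (p - 1) := Nat.mul_le_mul_left _ (by omega)
      have hx : m * (q + 1) = m * q + m := by ring
      have hcond : v ≤ p ^ s - m := by omega
      rw [if_pos hcond, min_eq_right (by omega : m ≤ v)]
      have heq : (Finset.univ.filter fun i : Fin m =>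
          (if i.val < r then ((q + 1 : ℕ) : ZMod p) else ((q : ℕ) : ZMod p)) ≠ 0) =
          Finset.univ := by
        apply Finset.filter_true_of_mem
        intro i _
        by_cases h : i.val < r
        · simp only [if_pos h]; exact hcast (q + 1) (by omega) (by omega)
        · simp only [if_neg h]; exact hcast q hq0 hqp
      rw [heq, Finset.card_univ, Fintype.card_fin]
  · -- q = p - 1 : weight m - r
    have hqe : q = p - 1 := by omega
    have hcnt : (Finset.univ.filter fun i : Fin m =>
        (if i.val < r then ((q + 1 : ℕ) : ZMod p) else ((q : ℕ) : ZMod p)) ≠ 0).card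
        = m - r := by
      have heq : (Finset.univ.filter fun i : Fin m =>
          (if i.val < r then ((q + 1 : ℕ) : ZMod p) else ((q : ℕ) : ZMod p)) ≠ 0) =
          Finset.univ.filter fun i : Fin m => ¬ i.val < r := by
        apply Finset.filter_congr
        intro i _
        have ha : ((q + 1 : ℕ) : ZMod p) = 0 := by
          rw [hqe, Nat.sub_add_cancel hp.one_lt.le, ZMod.natCast_self]
        have hb : ((q : ℕ) : ZMod p) ≠ 0 := hcast q (by omega) hqp
        by_cases h : i.val < r <;> simp [h, ha, hb]
      rw [heq, card_filter_not_val_lt m r hrm.le]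
    rw [hcnt]
    have hvm : v = m * (p - 1) + r := by rw [hvqr, hqe]
    have hmm : m ≤ m * (p - 1) := Nat.le_mul_of_pos_right _ (by omega)
    rcases Nat.eq_zero_or_pos r with hr0 | hr0
    · have hcond : v ≤ p ^ s - m := by omega
      rw [if_pos hcond, min_eq_right (by omega : m ≤ v)]
      omega
    · have hcond : ¬ v ≤ p ^ s - m := by omega
      rw [if_neg hcond]
      omega
end

section
/- If C is a linear code over Z_{p^s} of length n with minimum extended Lee distance d, then ⌊(d-1)/p^{s-1}⌋ ≤ n - log_{p^s}|C| (Singleton bound for the extended Lee weight). -/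
/-- The extended Lee weight of a vector, extended coordinatewise. -/
def leeWtV (p s n : ℕ) (x : Fin n → ZMod (p ^ s)) : ℕ :=
  ∑ i, leeWt p s (x i)

/- With `k = ⌊(d - 1) / p ^ (s - 1)⌋`, a codeword supported on `k` coordinates has Lee weight at
most `k * p ^ (s - 1) < d`, because each coordinate weighs at most `p ^ (s - 1)`; so it vanishes.
Hence deleting `k` coordinates is injective on `C`, and `|C| ≤ (p ^ s) ^ (n - k)`. -/

theorem AddSubgroup.natCard_le_pow_card_sub_card {ι A : Type*} [Fintype ι] [AddGroup A] [Finite A]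
    (C : AddSubgroup (ι → A)) (S : Finset ι) (hC : ∀ c ∈ C, (∀ i ∉ S, c i = 0) → c = 0) :
    Nat.card C ≤ Nat.card A ^ (Fintype.card ι - S.card) := by
  classical
  let restrict : C → (↥(Sᶜ) → A) := fun c i => (c : ι → A) i
  have hinj : Function.Injective restrict := by
    intro a b hab
    refine Subtype.ext (sub_eq_zero.1 (hC _ (sub_mem a.2 b.2) fun i hi => ?_))
    simpa [sub_eq_zero] using congrFun hab ⟨i, Finset.mem_compl.2 hi⟩
  calc Nat.card C ≤ Nat.card (↥(Sᶜ) → A) := Nat.card_le_card_of_injective restrict hinj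
    _ = Nat.card A ^ (Fintype.card ι - S.card) := by
      rw [Nat.card_fun, Nat.card_eq_fintype_card (α := ↥(Sᶜ)), Fintype.card_coe,
        Finset.card_compl]

theorem Real.logb_le_of_le_pow {b x : ℝ} {e : ℕ} (hb : 1 < b) (hx : 0 < x) (h : x ≤ b ^ e) :
    Real.logb b x ≤ e := by
  rwa [Real.logb_le_iff_le_rpow hb hx, Real.rpow_natCast]

section LeeWeight

variable {p s n : ℕ}

@[simp]
theorem leeWt_zero : leeWt p s 0 = 0 := by
  simp [leeWt]

theorem leeWt_le (x : ZMod (p ^ s)) : leeWt p s x ≤ p ^ (s - 1) := by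
  unfold leeWt
  split
  · exact min_le_right _ _
  · omega

theorem leeWt_eq_zero_iff (hp : 0 < p) {x : ZMod (p ^ s)} : leeWt p s x = 0 ↔ x = 0 := by
  have : NeZero (p ^ s) := ⟨(pow_pos hp s).ne'⟩
  have hx : x.val < p ^ s := ZMod.val_lt x
  have hm : 0 < p ^ (s - 1) := pow_pos hp _
  rw [leeWt, ← ZMod.val_eq_zero]
  split <;> omega

theorem leeWtV_eq_zero_iff (hp : 0 < p) {x : Fin n → ZMod (p ^ s)} :
    leeWtV p s n x = 0 ↔ x = 0 := by
  simp only [leeWtV, Finset.sum_eq_zero_iff, Finset.mem_univ, true_implies,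
    leeWt_eq_zero_iff hp, funext_iff, Pi.zero_apply]

theorem leeWtV_le_card_mul {x : Fin n → ZMod (p ^ s)} (S : Finset (Fin n))
    (hx : ∀ i ∉ S, x i = 0) : leeWtV p s n x ≤ S.card * p ^ (s - 1) := by
  calc leeWtV p s n x = ∑ i ∈ S, leeWt p s (x i) :=
        (Finset.sum_subset (Finset.subset_univ S) fun i _ hi => by simp [hx i hi]).symm
    _ ≤ S.card * p ^ (s - 1) := Finset.sum_le_card_nsmul _ _ _ fun i _ => leeWt_le (x i)

theorem leeWtV_le (x : Fin n → ZMod (p ^ s)) : leeWtV p s n x ≤ n * p ^ (s - 1) := by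
  simpa using leeWtV_le_card_mul (x := x) Finset.univ (by simp)

end LeeWeight

/-- Singleton bound for the extended Lee weight: if `C` is a linear code over
`ZMod (p^s)` of length `n` with minimum Lee distance `d`, then
`⌊(d-1)/p^(s-1)⌋ ≤ n - log_{p^s} |C|`. -/
theorem lee_singleton_bound (p s n d : ℕ) (hp : p.Prime) (hs : 1 ≤ s)
    (C : Submodule (ZMod (p ^ s)) (Fin n → ZMod (p ^ s)))
    (hex : ∃ c ∈ C, c ≠ 0 ∧ leeWtV p s n c = d)
    (hmin : ∀ c ∈ C, c ≠ 0 → d ≤ leeWtV p s n c) :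
    (((d - 1) / p ^ (s - 1) : ℕ) : ℝ) ≤
      (n : ℝ) - Real.logb ((p : ℝ) ^ s) (Nat.card C) := by
  have : NeZero (p ^ s) := ⟨(pow_pos hp.pos s).ne'⟩
  obtain ⟨c, -, hc0, hcd⟩ := hex
  set m := p ^ (s - 1)
  set k := (d - 1) / m
  have hd_pos : 0 < d := hcd ▸ Nat.pos_of_ne_zero ((leeWtV_eq_zero_iff hp.pos).not.2 hc0)
  have hkm : k * m < d := (Nat.div_mul_le_self _ _).trans_lt (Nat.sub_lt hd_pos one_pos)
  have hd_le : d ≤ n * m := hcd ▸ leeWtV_le c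
  have hkn : k ≤ n := Nat.div_le_of_le_mul (by rw [mul_comm]; omega)
  obtain ⟨S, -, hS⟩ := Finset.exists_subset_card_eq (s := (Finset.univ : Finset (Fin n)))
    (by simpa using hkn)
  have hvanish : ∀ x ∈ C, (∀ i ∉ S, x i = 0) → x = 0 := fun x hx hxS => by
    by_contra hx0
    have := hmin x hx hx0
    have : leeWtV p s n x ≤ k * m := hS ▸ leeWtV_le_card_mul S hxS
    omega
  have hcard : Nat.card C ≤ (p ^ s) ^ (n - k) := by
    simpa [hS] using AddSubgroup.natCard_le_pow_card_sub_card C.toAddSubgroup S hvanish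
  have hq : (1 : ℝ) < (p : ℝ) ^ s := one_lt_pow₀ (by exact_mod_cast hp.one_lt) (by omega)
  have hlog := Real.logb_le_of_le_pow (x := Nat.card C) (e := n - k) hq
    (by exact_mod_cast Nat.card_pos) (by exact_mod_cast hcard)
  push_cast [hkn] at hlog
  linarith
end

section
/- For a linear code C of length n over Z_{p^s}, rank(C) + free-rank(C^⊥) = n, where C^⊥ = {v : ⟨v,w⟩ = 0 for all w ∈ C} with the standard inner product mod p^s, rank(C) is the number of nonzero invariant factors of C, and free-rank is the number of invariant factors equal to p^s. -/
/-!
Let `K₁ = ker (p •)` and `K₂ = ker (p ^ (s - 1) •)` on `(ℤ/p^s)^n`. Then `p ^ r = |C ⊓ K₁|` and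
`|C^⊥| = p ^ f · |C^⊥ ⊓ K₂|`. Since `K₁ = p ^ (s - 1) • (ℤ/p^s)^n`, its dual is `K₂`, so
`C^⊥ ⊓ K₂ = (C ⊔ K₁)^⊥`. Pontryagin duality for `ℤ/p^s`-modules gives
`|X^⊥| = |(ℤ/p^s)^n ⧸ X|`; combined with `|C ⊔ K₁| · |C ⊓ K₁| = |C| · |K₁|` and `|K₁| = p ^ n`
this yields `|C^⊥ ⊓ K₂| · p ^ n = |C^⊥| · p ^ r`, hence `p ^ (r + f) = p ^ n`.
-/

open Submodule LinearMap

instance ZMod.hasEnoughRootsOfUnity_multiplicative (q : ℕ) [NeZero q] :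
    HasEnoughRootsOfUnity (Multiplicative (ZMod q)) q where
  prim := ⟨.ofAdd 1, IsPrimitiveRoot.iff_orderOf.2 <| by
    rw [orderOf_ofAdd_eq_addOrderOf, ZMod.addOrderOf_one]⟩
  cyc :=
    have : IsCyclic (Multiplicative (ZMod q))ˣ :=
      isCyclic_of_surjective (toUnits : Multiplicative (ZMod q) ≃* _) toUnits.surjective
    inferInstance

theorem ZMod.card_addMonoidHom_eq_card {q : ℕ} [NeZero q] {G : Type*} [AddCommGroup G]
    [Finite G] (hq : ∀ g : G, q • g = 0) : Nat.card (G →+ ZMod q) = Nat.card G := by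
  have : HasEnoughRootsOfUnity (Multiplicative (ZMod q)) (Monoid.exponent (Multiplicative G)) :=
    .of_dvd _ <| Monoid.exponent_dvd_of_forall_pow_eq_one fun g => hq g.toAdd
  calc Nat.card (G →+ ZMod q)
      = Nat.card (Multiplicative G →* (Multiplicative (ZMod q))ˣ) :=
        Nat.card_congr <| AddMonoidHom.toMultiplicative.trans
          (MulEquiv.monoidHomCongrRight toUnits).toEquiv
    _ = Nat.card G := CommGroup.card_monoidHom_of_hasEnoughRootsOfUnity _ _

theorem ZMod.card_dual {q : ℕ} [NeZero q] {M : Type*} [AddCommGroup M] [Module (ZMod q) M]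
    [Finite M] : Nat.card (Module.Dual (ZMod q) M) = Nat.card M := by
  rw [← Nat.card_congr (AddMonoidHom.toZModLinearMapEquiv q).toEquiv]
  refine ZMod.card_addMonoidHom_eq_card fun x => ?_
  rw [← Nat.cast_smul_eq_nsmul (ZMod q), ZMod.natCast_self, zero_smul]

section Card

variable {R M N : Type*} [Ring R] [AddCommGroup M] [Module R M] [AddCommGroup N] [Module R N]

theorem Submodule.card_map_mul_card_inf_ker (f : M →ₗ[R] N) (A : Submodule R M) :
    Nat.card (A.map f) * Nat.card ↥(A ⊓ ker f) = Nat.card A := by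
  rw [card_eq_card_quotient_mul_card (ker (f.domRestrict A)), mul_comm,
    Nat.card_congr (f.domRestrict A).quotKerEquivRange.toEquiv, range_domRestrict, ker_domRestrict,
    ← map_comap_subtype, Nat.card_congr (equivMapOfInjective _ A.injective_subtype _).symm.toEquiv]

theorem Submodule.card_sup_mul_card_inf (A B : Submodule R M) :
    Nat.card ↥(A ⊔ B) * Nat.card ↥(A ⊓ B) = Nat.card A * Nat.card B := by
  have hA := card_map_mul_card_inf_ker B.mkQ A
  have hAB := card_map_mul_card_inf_ker B.mkQ (A ⊔ B)
  rw [ker_mkQ] at hA hAB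
  rw [map_sup, mkQ_map_self, sup_bot_eq, inf_eq_right.2 le_sup_right] at hAB
  rw [← hAB, ← hA]
  ring

end Card

namespace ZMod

variable {q a b : ℕ} [NeZero q]

theorem natCast_mul_eq_zero_iff (hab : a * b = q) {x : ZMod q} :
    (a : ZMod q) * x = 0 ↔ ∃ y, x = b * y := by
  constructor
  · obtain ⟨k, rfl⟩ := natCast_zmod_surjective x
    rw [← Nat.cast_mul, natCast_eq_zero_iff, ← hab]
    intro hk
    have ha : 0 < a := Nat.pos_of_ne_zero (left_ne_zero_of_mul (hab ▸ NeZero.ne q))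
    obtain ⟨m, rfl⟩ := Nat.dvd_of_mul_dvd_mul_left ha hk
    exact ⟨m, by push_cast; rfl⟩
  · rintro ⟨y, rfl⟩
    rw [← mul_assoc, ← Nat.cast_mul, hab, natCast_self, zero_mul]

theorem card_natCast_mul_eq_zero (ha : a ∣ q) :
    Nat.card {x : ZMod q // (a : ZMod q) * x = 0} = a := by
  obtain ⟨b, hab⟩ := ha
  have hb : b ≠ 0 := right_ne_zero_of_mul (hab ▸ NeZero.ne q)
  have hmem (x : ZMod q) : (a : ZMod q) * x = 0 ↔ x ∈ AddSubgroup.zmultiples (b : ZMod q) := by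
    rw [natCast_mul_eq_zero_iff hab.symm, AddSubgroup.mem_zmultiples_iff]
    constructor
    · rintro ⟨y, rfl⟩
      exact ⟨y.cast, by rw [zsmul_eq_mul, intCast_zmod_cast, mul_comm]⟩
    · rintro ⟨k, rfl⟩
      exact ⟨k, by rw [zsmul_eq_mul, mul_comm]⟩
  rw [Nat.card_congr (Equiv.subtypeEquivRight hmem), Nat.card_zmultiples,
    addOrderOf_coe _ (NeZero.ne q), Nat.gcd_eq_right (hab ▸ dvd_mul_left b a), hab,
    Nat.mul_div_cancel _ (Nat.pos_of_ne_zero hb)]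

end ZMod

section

variable {ι : Type*} {q a b : ℕ} [NeZero q]

theorem ker_lsmul_natCast_eq_range_lsmul (hab : a * b = q) :
    ker (lsmul (ZMod q) (ι → ZMod q) a) = range (lsmul (ZMod q) (ι → ZMod q) b) := by
  ext v
  simp only [mem_ker, mem_range, lsmul_apply, funext_iff, Pi.smul_apply, smul_eq_mul,
    Pi.zero_apply, ZMod.natCast_mul_eq_zero_iff hab, eq_comm (a := v _)]
  exact Classical.skolem

theorem card_ker_lsmul_natCast [Fintype ι] (ha : a ∣ q) :
    Nat.card (ker (lsmul (ZMod q) (ι → ZMod q) a)) = a ^ Fintype.card ι := by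
  have e : ker (lsmul (ZMod q) (ι → ZMod q) a) ≃ (ι → {x : ZMod q // (a : ZMod q) * x = 0}) :=
    (Equiv.subtypeEquivRight fun v => by simp [funext_iff]).trans Equiv.subtypePiEquivPi
  rw [Nat.card_congr e, Nat.card_pi, ZMod.card_natCast_mul_eq_zero ha, Finset.prod_const,
    Finset.card_univ]

end

section DualCode

variable {R ι : Type*} [CommRing R] [Fintype ι] [DecidableEq ι]

def dualCode (C : Submodule R (ι → R)) : Submodule R (ι → R) :=
  C.dualAnnihilator.comap (dotProductEquiv R ι).toLinearMap

theorem mem_dualCode {C : Submodule R (ι → R)} {v : ι → R} :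
    v ∈ dualCode C ↔ ∀ w ∈ C, v ⬝ᵥ w = 0 := by
  simp [dualCode, mem_dualAnnihilator]

theorem dualCode_sup (A B : Submodule R (ι → R)) :
    dualCode (A ⊔ B) = dualCode A ⊓ dualCode B := by
  simp only [dualCode, dualAnnihilator_sup_eq, comap_inf]

theorem dualCode_range_lsmul (a : R) :
    dualCode (range (lsmul R (ι → R) a)) = ker (lsmul R (ι → R) a) := by
  ext v
  simp only [mem_dualCode, mem_range, lsmul_apply, forall_exists_index, forall_apply_eq_imp_iff,
    dotProduct_smul, ← smul_dotProduct, dotProduct_eq_zero_iff, mem_ker]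

theorem card_dualCode {q : ℕ} [NeZero q] (C : Submodule (ZMod q) (ι → ZMod q)) :
    Nat.card (dualCode C) = Nat.card ((ι → ZMod q) ⧸ C) := by
  rw [dualCode, comap_equiv_eq_map_symm,
    ← Nat.card_congr ((dotProductEquiv (ZMod q) ι).symm.submoduleMap _).toEquiv,
    ← Nat.card_congr C.dualQuotEquivDualAnnihilator.toEquiv, ZMod.card_dual]

theorem card_dualCode_inf_dualCode_mul_card {q : ℕ} [NeZero q]
    (C K : Submodule (ZMod q) (ι → ZMod q)) :
    Nat.card ↥(dualCode C ⊓ dualCode K) * Nat.card K =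
      Nat.card (dualCode C) * Nat.card ↥(C ⊓ K) := by
  have hC := card_eq_card_quotient_mul_card C
  have hCK := card_eq_card_quotient_mul_card (C ⊔ K)
  rw [← card_dualCode] at hC hCK
  rw [← dualCode_sup]
  refine Nat.eq_of_mul_eq_mul_left (Nat.card_pos (α := C)) ?_
  calc Nat.card C * (Nat.card (dualCode (C ⊔ K)) * Nat.card K)
      = Nat.card (dualCode (C ⊔ K)) * (Nat.card C * Nat.card K) := by ring
    _ = Nat.card (dualCode (C ⊔ K)) * (Nat.card ↥(C ⊔ K) * Nat.card ↥(C ⊓ K)) := by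
      rw [card_sup_mul_card_inf]
    _ = Nat.card C * (Nat.card (dualCode C) * Nat.card ↥(C ⊓ K)) := by
      rw [← mul_assoc, ← mul_assoc, mul_comm (Nat.card (dualCode _)), ← hCK, hC]

end DualCode

/-- `rank C = r` is encoded as `|C| = |p • C| · p ^ r`, and `free-rank C^⊥ = f` as
`|p ^ (s - 1) • C^⊥| = p ^ f`. -/
theorem rank_add_freeRank_dual (p s n r f : ℕ) (hp : p.Prime) (hs : 1 ≤ s)
    (C Cd : Submodule (ZMod (p ^ s)) (Fin n → ZMod (p ^ s)))
    (hCd : (Cd : Set (Fin n → ZMod (p ^ s))) =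
      {v | ∀ w ∈ C, ∑ i, v i * w i = 0})
    (hr : Nat.card C =
      Nat.card (Submodule.map
        (LinearMap.lsmul (ZMod (p ^ s)) (Fin n → ZMod (p ^ s)) (p : ZMod (p ^ s))) C) *
        p ^ r)
    (hf : Nat.card (Submodule.map
        (LinearMap.lsmul (ZMod (p ^ s)) (Fin n → ZMod (p ^ s))
          ((p : ZMod (p ^ s)) ^ (s - 1))) Cd) = p ^ f) :
    r + f = n := by
  have : NeZero (p ^ s) := ⟨pow_ne_zero s hp.ne_zero⟩
  have hps : p * p ^ (s - 1) = p ^ s := by rw [← pow_succ', Nat.sub_add_cancel hs]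
  set K₁ := ker (lsmul (ZMod (p ^ s)) (Fin n → ZMod (p ^ s)) (p : ZMod (p ^ s))) with hK₁_def
  set K₂ := ker (lsmul (ZMod (p ^ s)) (Fin n → ZMod (p ^ s)) ((p : ZMod (p ^ s)) ^ (s - 1)))
  have hCd' : Cd = dualCode C :=
    SetLike.coe_injective (hCd.trans (Set.ext fun _ => mem_dualCode.symm))
  have hK : dualCode K₁ = K₂ := by
    rw [hK₁_def, ker_lsmul_natCast_eq_range_lsmul hps, dualCode_range_lsmul, Nat.cast_pow]
  have hCK₁ : Nat.card ↥(C ⊓ K₁) = p ^ r :=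
    Nat.eq_of_mul_eq_mul_left Nat.card_pos ((card_map_mul_card_inf_ker _ C).trans hr)
  have hCdK₂ : p ^ f * Nat.card ↥(Cd ⊓ K₂) = Nat.card Cd := hf ▸ card_map_mul_card_inf_ker _ Cd
  have hdual : Nat.card ↥(Cd ⊓ K₂) * p ^ n = Nat.card Cd * p ^ r := by
    have hK₁ : Nat.card K₁ = p ^ n := by
      rw [card_ker_lsmul_natCast (Dvd.intro _ hps), Fintype.card_fin]
    rw [← hCK₁, ← hK₁, hCd', ← hK]
    exact card_dualCode_inf_dualCode_mul_card C K₁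
  have hpow : p ^ (r + f) = p ^ n := by
    refine Nat.eq_of_mul_eq_mul_right (Nat.card_pos (α := ↥(Cd ⊓ K₂))) ?_
    calc p ^ (r + f) * Nat.card ↥(Cd ⊓ K₂) = p ^ r * (p ^ f * Nat.card ↥(Cd ⊓ K₂)) := by ring
      _ = p ^ n * Nat.card ↥(Cd ⊓ K₂) := by rw [hCdK₂, mul_comm, ← hdual, mul_comm]
  exact Nat.pow_right_injective hp.two_le hpow
end

section
/- For the Gray map φ_L on Z_{p^s} extended coordinatewise to Z_{p^s}^n, and for any vectors v, w ∈ Z_{p^s}^n: φ_L(p^{s-1}·v + w) = φ_L(p^{s-1}·v) + φ_L(w). -/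
/-- The Gray map extended coordinatewise to vectors. -/
def grayV (p s n : ℕ) (v : Fin n → ZMod (p ^ s)) : Fin n → Fin (p ^ (s - 1)) → ZMod p :=
  fun i => gray p s (v i)

def grayNat (p m x : ℕ) : Fin m → ZMod p :=
  fun i => if i.val < x % m then ((x / m + 1 : ℕ) : ZMod p) else ((x / m : ℕ) : ZMod p)

lemma gray_eq_grayNat (p s : ℕ) (x : ZMod (p ^ s)) : gray p s x = grayNat p (p ^ (s - 1)) x.val :=
  rfl

section grayNat

variable {p m : ℕ}

lemma grayNat_add_mul (hm : 0 < m) (x k : ℕ) :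
    grayNat p m (x + m * k) = grayNat p m x + fun _ => (k : ZMod p) := by
  funext i
  simp only [grayNat, Pi.add_apply, Nat.add_mul_mod_self_left, Nat.add_mul_div_left _ _ hm]
  split <;> push_cast <;> ring

lemma grayNat_mul (hm : 0 < m) (k : ℕ) : grayNat p m (m * k) = fun _ => (k : ZMod p) := by
  have hzero : grayNat p m 0 = 0 := by
    funext i
    simp [grayNat]
  simpa [hzero] using grayNat_add_mul (p := p) hm 0 k

-- Reducing modulo `m * p` changes the block index `x / m` by a multiple of `p`.
lemma grayNat_mod_mul_self (hm : 0 < m) (x : ℕ) : grayNat p m (x % (m * p)) = grayNat p m x := by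
  conv_rhs => rw [← Nat.mod_add_div x (m * p), mul_assoc, grayNat_add_mul hm]
  funext i
  simp

end grayNat

lemma ZMod.dvd_val_natCast_mul {n d : ℕ} [NeZero n] (hd : d ∣ n) (a : ZMod n) :
    d ∣ ((d : ZMod n) * a).val := by
  rw [ZMod.val_mul, ZMod.val_natCast, Nat.dvd_mod_iff hd]
  exact ((Nat.dvd_mod_iff hd).mpr dvd_rfl).mul_right _

lemma gray_pow_mul_add (p s : ℕ) (hp : p.Prime) (hs : 1 ≤ s) (a b : ZMod (p ^ s)) :
    gray p s ((p : ZMod (p ^ s)) ^ (s - 1) * a + b) =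
      gray p s ((p : ZMod (p ^ s)) ^ (s - 1) * a) + gray p s b := by
  have : NeZero (p ^ s) := ⟨pow_ne_zero _ hp.ne_zero⟩
  set m := p ^ (s - 1)
  have hm : 0 < m := pow_pos hp.pos _
  have hmp : p ^ s = m * p := by rw [← pow_succ, Nat.sub_add_cancel hs]
  set c := (p : ZMod (p ^ s)) ^ (s - 1) * a
  obtain ⟨k, hk⟩ : m ∣ c.val := by
    simpa [c, m] using ZMod.dvd_val_natCast_mul (pow_dvd_pow p (Nat.sub_le s 1)) a
  calc gray p s (c + b)
      = grayNat p m ((c.val + b.val) % (m * p)) := by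
        rw [gray_eq_grayNat, ZMod.val_add]
        exact congrArg (fun N => grayNat p m ((c.val + b.val) % N)) hmp
    _ = grayNat p m (b.val + m * k) := by rw [grayNat_mod_mul_self hm, hk, add_comm]
    _ = grayNat p m (m * k) + grayNat p m b.val := by
        rw [grayNat_add_mul hm, grayNat_mul hm, add_comm]
    _ = gray p s c + gray p s b := by rw [← hk]; rfl

/-- `φ_L(p^(s-1)·v + w) = φ_L(p^(s-1)·v) + φ_L(w)` for all vectors `v, w`. -/
theorem grayV_add_torsion (p s n : ℕ) (hp : p.Prime) (hs : 1 ≤ s)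
    (v w : Fin n → ZMod (p ^ s)) :
    grayV p s n ((p : ZMod (p ^ s)) ^ (s - 1) • v + w) =
      grayV p s n ((p : ZMod (p ^ s)) ^ (s - 1) • v) + grayV p s n w :=
  funext fun i => gray_pow_mul_add p s hp hs (v i) (w i)
end

section
/- If v ∈ Z_{p^s}^n has additive order p (i.e., v = p^{s-1}·u for some u), then for every w ∈ Z_{p^s}^n, φ_L(v + w) = φ_L(v) + φ_L(w), and φ_L(v) is a constant-blocks vector: each coordinate block φ_L(v_i) is the constant vector (u_i mod p, ..., u_i mod p) of length p^{s-1}. -/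
/-!
Write `N = p^(s-1)`, so `p^s = N·p`. The Gray image of `x` only depends on the quotient
`x.val / N` read mod `p` and on the remainder `x.val % N`. Adding `N·u` to `w` leaves the
remainder of `w` unchanged and adds `u` to the quotient mod `p`, so
`φ_L(N·u + w) = (u mod p) + φ_L(w)` coordinatewise; `w = 0` gives the constant blocks.
-/

section
variable {p s : ℕ}

lemma gray_natCast (hs : 1 ≤ s) (t : ℕ) (i : Fin (p ^ (s - 1))) :
    gray p s (t : ZMod (p ^ s)) i =
      ((t / p ^ (s - 1) : ℕ) : ZMod p) + if i.val < t % p ^ (s - 1) then 1 else 0 := by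
  have hps : p ^ s = p ^ (s - 1) * p := (pow_sub_one_mul (by omega) p).symm
  have hrem : (t : ZMod (p ^ s)).val % p ^ (s - 1) = t % p ^ (s - 1) := by
    rw [ZMod.val_natCast, hps, Nat.mod_mul_right_mod]
  have hquot : (((t : ZMod (p ^ s)).val / p ^ (s - 1) : ℕ) : ZMod p) =
      ((t / p ^ (s - 1) : ℕ) : ZMod p) := by
    rw [ZMod.val_natCast, hps, Nat.mod_mul_right_div_self, ZMod.natCast_mod]
  unfold gray
  rw [hrem]
  split_ifs <;> push_cast [hquot] <;> ring

lemma gray_pow_pred_mul_add (hp : p ≠ 0) (hs : 1 ≤ s) (u w : ZMod (p ^ s))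
    (i : Fin (p ^ (s - 1))) :
    gray p s ((p : ZMod (p ^ s)) ^ (s - 1) * u + w) i = (u.val : ZMod p) + gray p s w i := by
  have : NeZero (p ^ s) := ⟨pow_ne_zero s hp⟩
  have hN : 0 < p ^ (s - 1) := Nat.pos_of_ne_zero (pow_ne_zero _ hp)
  have hcast : (p : ZMod (p ^ s)) ^ (s - 1) * u + w =
      ((p ^ (s - 1) * u.val + w.val : ℕ) : ZMod (p ^ s)) := by
    push_cast [ZMod.natCast_zmod_val]
    rfl
  rw [hcast, gray_natCast hs, Nat.mul_add_div hN, Nat.mul_add_mod]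
  conv_rhs => rw [← ZMod.natCast_zmod_val w, gray_natCast hs]
  push_cast
  ring

lemma gray_pow_pred_mul (hp : p ≠ 0) (hs : 1 ≤ s) (u : ZMod (p ^ s)) (i : Fin (p ^ (s - 1))) :
    gray p s ((p : ZMod (p ^ s)) ^ (s - 1) * u) i = (u.val : ZMod p) := by
  simpa [gray] using gray_pow_pred_mul_add hp hs u 0 i

end

/-- If `v = p^(s-1)·u` (so `v` has order dividing `p`), then
`φ_L(v + w) = φ_L(v) + φ_L(w)` for every `w`, and `φ_L(v)` is a constant-blocks
vector: each block `φ_L(v_i)` is constantly `u_i mod p`. -/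
theorem grayV_order_p_additive_and_const (p s n : ℕ) (hp : p.Prime) (hs : 1 ≤ s)
    (u w : Fin n → ZMod (p ^ s)) :
    grayV p s n ((p : ZMod (p ^ s)) ^ (s - 1) • u + w) =
      grayV p s n ((p : ZMod (p ^ s)) ^ (s - 1) • u) + grayV p s n w ∧
    ∀ i j, grayV p s n ((p : ZMod (p ^ s)) ^ (s - 1) • u) i j =
      (((u i).val : ℕ) : ZMod p) := by
  refine ⟨?_, fun i j => gray_pow_pred_mul hp.ne_zero hs (u i) j⟩
  funext i j
  simp only [grayV, Pi.add_apply, Pi.smul_apply, smul_eq_mul,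
    gray_pow_pred_mul_add hp.ne_zero hs, gray_pow_pred_mul hp.ne_zero hs]
end
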